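/- arXiv:2003.12906 — 2 statements merged into one kernel-verified Lean document; each statement's English description precedes it below -/
import Mathlib

section
/- The weighted average aggregation of finitely many non-standard probability assignments is a non-standard probability assignment: if p₁, …, p_n each satisfy normalization (0 ≤ p_i^±(φ) ≤ 1), monotonicity, and import-export (p_i^±(φ∧ψ) + p_i^±(φ∨ψ) = p_i^±(φ) + p_i^±(ψ)), and w₁, …, w_n ∈ [0,1] with ∑w_i > 0, then WA(φ) := (∑ w_i p_i⁺(φ) / ∑ w_i, ∑ w_i p_i⁻(φ) / ∑ w_i) also satisfies normalization, monotonicity, and import-export. -/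
/-- Formulas of Belnap–Dunn logic over atoms `A`. -/
inductive BDForm (A : Type) where
  | atom : A → BDForm A
  | and : BDForm A → BDForm A → BDForm A
  | or  : BDForm A → BDForm A → BDForm A
  | neg : BDForm A → BDForm A

/-- Double-valuation support: `(sup vp vn φ w).1` is positive support,
`(sup vp vn φ w).2` is negative support. -/
def BDForm.sup {A W : Type} (vp vn : W → A → Bool) : BDForm A → W → Bool × Bool
  | .atom a, w => (vp w a, vn w a)
  | .and φ ψ, w => ((sup vp vn φ w).1 && (sup vp vn ψ w).1,
                    (sup vp vn φ w).2 || (sup vp vn ψ w).2)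
  | .or φ ψ, w => ((sup vp vn φ w).1 || (sup vp vn ψ w).1,
                   (sup vp vn φ w).2 && (sup vp vn ψ w).2)
  | .neg φ, w => ((sup vp vn φ w).2, (sup vp vn φ w).1)

/-- Positive probability of a formula w.r.t. a mass function. -/
noncomputable def pPlus {A W : Type} [Fintype W] (m : W → ℝ)
    (vp vn : W → A → Bool) (φ : BDForm A) : ℝ :=
  ∑ w ∈ Finset.univ.filter (fun w => (BDForm.sup vp vn φ w).1 = true), m w

/-- Negative probability of a formula w.r.t. a mass function. -/
noncomputable def pMinus {A W : Type} [Fintype W] (m : W → ℝ)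
    (vp vn : W → A → Bool) (φ : BDForm A) : ℝ :=
  ∑ w ∈ Finset.univ.filter (fun w => (BDForm.sup vp vn φ w).2 = true), m w

/-- Semantic BD entailment: preservation of positive support in every
double-valuation model. -/
def BDEnt {A : Type} (φ ψ : BDForm A) : Prop :=
  ∀ (W : Type) (vp vn : W → A → Bool) (w : W),
    (BDForm.sup vp vn φ w).1 = true → (BDForm.sup vp vn ψ w).1 = true

/-- A non-standard probability assignment: normalization (A1),
monotonicity (A2), and import-export (A3). -/
def NSProb {A : Type} (p : BDForm A → ℝ × ℝ) : Prop :=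
  (∀ φ, (p φ).1 ∈ Set.Icc (0:ℝ) 1 ∧ (p φ).2 ∈ Set.Icc (0:ℝ) 1) ∧
  (∀ φ ψ, BDEnt φ ψ → (p φ).1 ≤ (p ψ).1 ∧ (p ψ).2 ≤ (p φ).2) ∧
  (∀ φ ψ, (p (.and φ ψ)).1 + (p (.or φ ψ)).1 = (p φ).1 + (p ψ).1 ∧
          (p (.and φ ψ)).2 + (p (.or φ ψ)).2 = (p φ).2 + (p ψ).2)

/-! The weighted average is the center of mass `∑ wᵢ pᵢ / ∑ wᵢ` of the `pᵢ` in the real vector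
space `BDForm A → ℝ × ℝ`, so it suffices that non-standard probability assignments form a convex
set there: (A1) asks values to lie in the convex square `[0,1]²`, while (A2) and (A3) are linear
(in)equalities, preserved by combinations with nonnegative coefficients. -/

theorem convex_setOf_NSProb {A : Type} : Convex ℝ {p : BDForm A → ℝ × ℝ | NSProb p} := by
  rintro p ⟨hp_norm, hp_mono, hp_add⟩ q ⟨hq_norm, hq_mono, hq_add⟩ a b ha hb hab
  refine ⟨fun φ => ⟨?_, ?_⟩, fun φ ψ h => ⟨?_, ?_⟩, fun φ ψ => ⟨?_, ?_⟩⟩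
  · exact convex_Icc (0 : ℝ) 1 (hp_norm φ).1 (hq_norm φ).1 ha hb hab
  · exact convex_Icc (0 : ℝ) 1 (hp_norm φ).2 (hq_norm φ).2 ha hb hab
  · exact add_le_add (mul_le_mul_of_nonneg_left (hp_mono φ ψ h).1 ha)
      (mul_le_mul_of_nonneg_left (hq_mono φ ψ h).1 hb)
  · exact add_le_add (mul_le_mul_of_nonneg_left (hp_mono φ ψ h).2 ha)
      (mul_le_mul_of_nonneg_left (hq_mono φ ψ h).2 hb)
  all_goals simp only [Pi.add_apply, Pi.smul_apply, Prod.fst_add, Prod.snd_add, Prod.smul_fst,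
    Prod.smul_snd, smul_eq_mul]
  · linear_combination a * (hp_add φ ψ).1 + b * (hq_add φ ψ).1
  · linear_combination a * (hp_add φ ψ).2 + b * (hq_add φ ψ).2

theorem Finset.centerMass_prod_apply {ι X : Type*} (t : Finset ι) (w : ι → ℝ)
    (p : ι → X → ℝ × ℝ) (x : X) :
    t.centerMass w p x =
      ((∑ i ∈ t, w i * (p i x).1) / ∑ i ∈ t, w i, (∑ i ∈ t, w i * (p i x).2) / ∑ i ∈ t, w i) := by
  ext <;> simp only [Finset.centerMass, Pi.smul_apply, Finset.sum_apply, Prod.smul_fst,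
    Prod.smul_snd, Prod.fst_sum, Prod.snd_sum, smul_eq_mul, div_eq_inv_mul]

/-- Weighted average of non-standard probability assignments is a
non-standard probability assignment. -/
theorem weighted_average_NSProb {A : Type} (n : ℕ)
    (p : Fin n → BDForm A → ℝ × ℝ) (w : Fin n → ℝ)
    (hp : ∀ i, NSProb (p i)) (hw : ∀ i, w i ∈ Set.Icc (0:ℝ) 1)
    (hsum : 0 < ∑ i, w i) :
    NSProb (fun φ =>
      ((∑ i, w i * (p i φ).1) / (∑ i, w i),
       (∑ i, w i * (p i φ).2) / (∑ i, w i))) := by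
  simp_rw [← Finset.centerMass_prod_apply]
  exact convex_setOf_NSProb.centerMass_mem (fun i _ => (hw i).1) hsum (fun i _ => hp i)
end

section
/- There exist non-standard probability assignments p₁, p₂ (each satisfying normalization, monotonicity, and import-export) on Belnap–Dunn formulas such that the Min aggregation Min(φ) := (min(p₁⁺(φ), p₂⁺(φ)), min(p₁⁻(φ), p₂⁻(φ))) violates the import-export axiom, i.e., Min⁺(φ∧ψ) + Min⁺(φ∨ψ) ≠ Min⁺(φ) + Min⁺(ψ) for some formulas φ, ψ. -/
/-!
A mass function on a finite double-valuation model induces a non-standard probability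
assignment: positive and negative probabilities are masses of support sets, so (A3) is
inclusion–exclusion, and monotonicity of negative support under entailment comes from applying
the entailment in the model with complemented, swapped valuations. Take the one-world models
supporting only the atom `0`, resp. only `1`: the minima of the two assignments vanish on both
atoms and on their conjunction but equal `1` on their disjunction.
-/

open Finset

theorem BDForm.sup_compl {A W : Type} (vp vn : W → A → Bool) (φ : BDForm A) (w : W) :
    BDForm.sup (fun w a => !vn w a) (fun w a => !vp w a) φ w
      = (!(BDForm.sup vp vn φ w).2, !(BDForm.sup vp vn φ w).1) := by
  induction φ with
  | atom a => rfl
  | and φ ψ ihφ ihψ => simp [BDForm.sup, ihφ, ihψ]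
  | or φ ψ ihφ ihψ => simp [BDForm.sup, ihφ, ihψ]
  | neg φ ih => simp [BDForm.sup, ih]

theorem BDEnt.neg_support {A W : Type} {φ ψ : BDForm A} (h : BDEnt φ ψ)
    (vp vn : W → A → Bool) (w : W) :
    (BDForm.sup vp vn ψ w).2 = true → (BDForm.sup vp vn φ w).2 = true := by
  have := h W (fun w a => !vn w a) (fun w a => !vp w a) w
  simp only [BDForm.sup_compl, Bool.not_eq_true'] at this
  contrapose
  simpa using this

theorem sum_filter_and_add_sum_filter_or {W : Type*} (m : W → ℝ) (s : Finset W)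
    (S T : W → Bool) :
    ∑ w ∈ s.filter (fun w => (S w && T w) = true), m w +
        ∑ w ∈ s.filter (fun w => (S w || T w) = true), m w =
      ∑ w ∈ s.filter (fun w => S w = true), m w +
        ∑ w ∈ s.filter (fun w => T w = true), m w := by
  simp only [sum_filter, ← sum_add_distrib]
  refine sum_congr rfl fun w _ => ?_
  cases S w <;> cases T w <;> simp

section MassFunction

variable {W : Type*} [Fintype W] {m : W → ℝ}

theorem sum_filter_mem_Icc (hm : ∀ w, 0 ≤ m w) (hsum : ∑ w, m w = 1) (S : W → Bool) :
    ∑ w ∈ univ.filter (fun w => S w = true), m w ∈ Set.Icc 0 1 :=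
  ⟨sum_nonneg fun w _ => hm w,
    hsum ▸ sum_le_sum_of_subset_of_nonneg (filter_subset _ _) fun w _ _ => hm w⟩

theorem sum_filter_mono (hm : ∀ w, 0 ≤ m w) {S T : W → Bool}
    (h : ∀ w, S w = true → T w = true) :
    ∑ w ∈ univ.filter (fun w => S w = true), m w ≤
      ∑ w ∈ univ.filter (fun w => T w = true), m w :=
  sum_le_sum_of_subset_of_nonneg (monotone_filter_right _ fun w _ => h w) fun w _ _ => hm w

end MassFunction

theorem nsProb_pPlus_pMinus {A W : Type} [Fintype W] {m : W → ℝ} (hm : ∀ w, 0 ≤ m w)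
    (hsum : ∑ w, m w = 1) (vp vn : W → A → Bool) :
    NSProb fun φ => (pPlus m vp vn φ, pMinus m vp vn φ) :=
  ⟨fun _ => ⟨sum_filter_mem_Icc hm hsum _, sum_filter_mem_Icc hm hsum _⟩,
    fun _ _ h => ⟨sum_filter_mono hm (h W vp vn), sum_filter_mono hm (h.neg_support vp vn)⟩,
    fun _ _ => ⟨sum_filter_and_add_sum_filter_or m _ _ _,
      (add_comm _ _).trans (sum_filter_and_add_sum_filter_or m _ _ _)⟩⟩

noncomputable def atomPointMass (a : ℕ) : BDForm ℕ → ℝ × ℝ :=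
  fun φ => (pPlus (fun _ : Unit => 1) (fun _ b => b == a) (fun _ _ => false) φ,
    pMinus (fun _ : Unit => 1) (fun _ b => b == a) (fun _ _ => false) φ)

theorem nsProb_atomPointMass (a : ℕ) : NSProb (atomPointMass a) :=
  nsProb_pPlus_pMinus (fun _ => zero_le_one) (by simp) _ _

/-- Min aggregation of two non-standard probability assignments may violate
the import-export axiom. -/
theorem min_aggregation_not_NSProb :
    ∃ p₁ p₂ : BDForm ℕ → ℝ × ℝ, NSProb p₁ ∧ NSProb p₂ ∧
      ∃ φ ψ : BDForm ℕ,
        min (p₁ (.and φ ψ)).1 (p₂ (.and φ ψ)).1 +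
          min (p₁ (.or φ ψ)).1 (p₂ (.or φ ψ)).1 ≠
        min (p₁ φ).1 (p₂ φ).1 + min (p₁ ψ).1 (p₂ ψ).1 := by
  refine ⟨atomPointMass 0, atomPointMass 1, nsProb_atomPointMass 0, nsProb_atomPointMass 1,
    .atom 0, .atom 1, ?_⟩
  norm_num [atomPointMass, pPlus, BDForm.sup]
end
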